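/- Fix y ∈ {−1, +1} and ν > 0, and define Ψ₀(m) = ∫ 2·max(0, 1 − yη) φ(η; m, ν²) dη. Then for every m ∈ ℝ, the derivative of Ψ₀ with respect to m equals −2y Φ(1; ym, ν²). -/

import Mathlib

open MeasureTheory Real Filter

/-- Gaussian density with mean `m` and variance `ν ^ 2`, evaluated at `x`:
`φ(x; m, ν²) = (2πν²)^{-1/2} exp(−(x−m)²/(2ν²))`. -/
noncomputable def gpdf (m ν x : ℝ) : ℝ :=
  (Real.sqrt (2 * Real.pi * ν ^ 2))⁻¹ * Real.exp (-((x - m) ^ 2) / (2 * ν ^ 2))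

/-- Gaussian cumulative distribution function with mean `m` and variance `ν ^ 2`:
`Φ(c; m, ν²) = ∫_{−∞}^{c} φ(η; m, ν²) dη`. -/
noncomputable def gcdf (m ν c : ℝ) : ℝ := ∫ x in Set.Iio c, gpdf m ν x

/-!
Since `y ^ 2 = 1`, the substitution `η ↦ y η` carries `φ(·; m, ν²)` to `φ(·; y m, ν²)`, so
the risk is `m ↦ 2 Ψ(y m)` with `Ψ(a) = ∫ max(0, 1 - η) φ(η; a, ν²) dη`. Writing `1 - η` on
`η < 1` as `(1 - a) - (η - a)` and integrating `(η - a) φ = -ν² ∂_η φ` exactly gives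
`Ψ(a) = (1 - a) Φ(1; a, ν²) + ν² φ(1; a, ν²)`. Differentiating in `a`, the two terms in
`φ(1; a, ν²)` cancel and `Ψ'(a) = -Φ(1; a, ν²)`.
-/

open Set

section GaussianDensity

variable {ν : ℝ}

lemma gpdf_comm (m x : ℝ) : gpdf m ν x = gpdf x ν m := by
  unfold gpdf; ring_nf

lemma gpdf_sub (m x : ℝ) : gpdf m ν x = gpdf 0 ν (x - m) := by
  unfold gpdf; rw [sub_zero]

lemma gpdf_mul_mul {y : ℝ} (hy : |y| = 1) (m x : ℝ) :
    gpdf (y * m) ν (y * x) = gpdf m ν x := by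
  have hy2 : y ^ 2 = 1 := by rw [← sq_abs, hy, one_pow]
  unfold gpdf
  rw [← mul_sub, mul_pow, hy2, one_mul]

-- `gpdf m ν` is definitionally `gaussianPDFReal m` with variance `ν ^ 2`.
lemma integrable_gpdf (m : ℝ) : Integrable (gpdf m ν) :=
  ProbabilityTheory.integrable_gaussianPDFReal m ⟨ν ^ 2, sq_nonneg ν⟩

lemma continuous_gpdf (m : ℝ) : Continuous (gpdf m ν) := by
  unfold gpdf; fun_prop

lemma integrable_sub_mul_gpdf (hν : ν ≠ 0) (m : ℝ) :
    Integrable (fun x => (x - m) * gpdf m ν x) := by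
  have h := ((integrable_mul_exp_neg_mul_sq (b := (2 * ν ^ 2)⁻¹) (by positivity)).comp_sub_right
    m).const_mul (Real.sqrt (2 * Real.pi * ν ^ 2))⁻¹
  refine h.congr (ae_of_all _ fun x => ?_)
  unfold gpdf
  ring_nf

lemma hasDerivAt_gpdf (hν : ν ≠ 0) (m x : ℝ) :
    HasDerivAt (gpdf m ν) (-(x - m) / ν ^ 2 * gpdf m ν x) x := by
  have h := ((((hasDerivAt_id' x).sub_const m).fun_pow 2).fun_neg.div_const
    (2 * ν ^ 2)).exp.const_mul (Real.sqrt (2 * Real.pi * ν ^ 2))⁻¹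
  refine h.congr_deriv ?_
  unfold gpdf
  field_simp
  ring

lemma hasDerivAt_gpdf_mean (hν : ν ≠ 0) (m x : ℝ) :
    HasDerivAt (fun a => gpdf a ν x) ((x - m) / ν ^ 2 * gpdf m ν x) m := by
  simp_rw [gpdf_comm _ x]
  refine (hasDerivAt_gpdf hν x m).congr_deriv ?_
  ring

lemma setIntegral_Iio_sub_mul_gpdf (hν : ν ≠ 0) (m c : ℝ) :
    ∫ x in Iio c, (x - m) * gpdf m ν x = -(ν ^ 2 * gpdf m ν c) := by
  have hderiv : ∀ x, HasDerivAt (gpdf m ν) (-((x - m) * gpdf m ν x) / ν ^ 2) x := fun x =>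
    (hasDerivAt_gpdf hν m x).congr_deriv (by ring)
  have hint : Integrable (fun x => -((x - m) * gpdf m ν x) / ν ^ 2) :=
    (integrable_sub_mul_gpdf hν m).neg.div_const _
  have hlim : Tendsto (gpdf m ν) atBot (nhds 0) :=
    tendsto_zero_of_hasDerivAt_of_integrableOn_Iic (a := 0) (fun x _ => hderiv x)
      hint.integrableOn (integrable_gpdf m).integrableOn
  have h := integral_Iic_of_hasDerivAt_of_tendsto' (a := c) (fun x _ => hderiv x)
    hint.integrableOn hlim
  rw [integral_Iic_eq_integral_Iio, integral_div, integral_neg] at h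
  field_simp at h
  linarith

lemma hasDerivAt_gcdf (m c : ℝ) : HasDerivAt (gcdf m ν) (gpdf m ν c) c := by
  have hFTC : HasDerivAt (fun b => ∫ x in (0 : ℝ)..b, gpdf m ν x) (gpdf m ν c) c :=
    intervalIntegral.integral_hasDerivAt_right (integrable_gpdf m).intervalIntegrable
      ((continuous_gpdf m).stronglyMeasurableAtFilter _ _) (continuous_gpdf m).continuousAt
  refine (hFTC.const_add (gcdf m ν 0)).congr_of_eventuallyEq (Eventually.of_forall fun b => ?_)
  dsimp only
  rw [← intervalIntegral.integral_Iio_sub_Iio' (integrable_gpdf m).integrableOn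
    (integrable_gpdf m).integrableOn]
  unfold gcdf
  ring

lemma gcdf_sub (m c : ℝ) : gcdf m ν c = gcdf 0 ν (c - m) := by
  have h := (measurePreserving_sub_right volume m).setIntegral_preimage_emb
    (measurableEmbedding_subRight m) (gpdf 0 ν) (Iio (c - m))
  simp only [preimage_sub_const_Iio, sub_add_cancel, ← gpdf_sub] at h
  exact h

lemma hasDerivAt_gcdf_mean (m c : ℝ) :
    HasDerivAt (fun a => gcdf a ν c) (-gpdf m ν c) m := by
  simp_rw [gcdf_sub _ c]
  refine ((hasDerivAt_gcdf 0 (c - m)).comp m ((hasDerivAt_id m).const_sub c)).congr_deriv ?_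
  rw [gpdf_sub m c]; ring

lemma integral_comp_mul_mul_gpdf {y : ℝ} (hy : |y| = 1) (g : ℝ → ℝ) (m : ℝ) :
    ∫ η, g (y * η) * gpdf m ν η = ∫ η, g η * gpdf (y * m) ν η := by
  simp_rw [← gpdf_mul_mul hy m]
  rw [Measure.integral_comp_mul_left (fun η => g η * gpdf (y * m) ν η), abs_inv, hy, inv_one,
    one_smul]

end GaussianDensity

section HingeLoss

variable {ν : ℝ}

lemma integral_max_sub_mul_gpdf (hν : ν ≠ 0) (m c : ℝ) :
    ∫ η, max 0 (c - η) * gpdf m ν η = (c - m) * gcdf m ν c + ν ^ 2 * gpdf m ν c := by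
  have hsplit : (fun η => max 0 (c - η) * gpdf m ν η) =
      (Iio c).indicator fun η => (c - m) * gpdf m ν η - (η - m) * gpdf m ν η := by
    funext η
    by_cases h : η < c
    · rw [indicator_of_mem (mem_Iio.2 h), max_eq_right (by linarith)]; ring
    · rw [indicator_of_notMem (mt mem_Iio.1 h), max_eq_left (by linarith), zero_mul]
  rw [hsplit, integral_indicator measurableSet_Iio,
    integral_sub ((integrable_gpdf m).const_mul _).integrableOn
      (integrable_sub_mul_gpdf hν m).integrableOn,
    integral_const_mul, setIntegral_Iio_sub_mul_gpdf hν, gcdf, sub_neg_eq_add]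

lemma hasDerivAt_integral_max_sub_mul_gpdf (hν : ν ≠ 0) (c m : ℝ) :
    HasDerivAt (fun a => ∫ η, max 0 (c - η) * gpdf a ν η) (-gcdf m ν c) m := by
  simp_rw [integral_max_sub_mul_gpdf hν]
  have h := (((hasDerivAt_id' m).const_sub c).fun_mul (hasDerivAt_gcdf_mean (ν := ν) m c)).fun_add
    ((hasDerivAt_gpdf_mean hν m c).const_mul (ν ^ 2))
  refine h.congr_deriv ?_
  field_simp
  ring

end HingeLoss

theorem svc_Psi1 (y ν : ℝ) (hy : y = -1 ∨ y = 1) (hν : 0 < ν) (m : ℝ) :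
    HasDerivAt (fun m' => ∫ η, 2 * max 0 (1 - y * η) * gpdf m' ν η)
      (-2 * y * gcdf (y * m) ν 1) m := by
  have hy_abs : |y| = 1 := by rcases hy with rfl | rfl <;> norm_num
  have hΨ : (fun m' => ∫ η, 2 * max 0 (1 - y * η) * gpdf m' ν η) =
      fun m' => 2 * ∫ η, max 0 (1 - η) * gpdf (y * m') ν η := by
    funext m'
    rw [← integral_comp_mul_mul_gpdf hy_abs (fun t => max 0 (1 - t)), ← integral_const_mul]
    simp only [mul_assoc]
  rw [hΨ]
  refine (((hasDerivAt_integral_max_sub_mul_gpdf hν.ne' 1 (y * m)).comp m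
    ((hasDerivAt_id' m).const_mul y)).const_mul 2).congr_deriv ?_
  ring
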